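/- arXiv:1111.6924 — 2 statements merged into one kernel-verified Lean document; each statement's English description precedes it below -/
import Mathlib

section
/- Let Λ be a countable finitely aligned category of paths, v a vertex, and C ∈ vΛ*. Then: (a) 𝒰_{C,0} is an ultrafilter in 𝒜_v if and only if C ∈ vΛ**; (b) 𝒰_C is an ultrafilter in 𝒜_v, and 𝒰_C is fixed (i.e. equal to {E ∈ 𝒜_v : γ ∈ E} for some γ ∈ vΛ) if and only if C contains a maximal element with respect to the extension order; (c) every ultrafilter in 𝒜_v equals 𝒰_C for a unique C ∈ vΛ*. -/
/-!
`𝒜_v` is generated by the tails `βΛ`, and the sets that lie in a filter or are disjoint from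
one of its members form a ring of sets; so a filter in `𝒜_v` is an ultrafilter as soon as every
tail lies in it or misses one of its members, and two ultrafilters containing the same tails
coincide. For hereditary `C` we have `βΛ ∈ 𝒰_C ↔ β ∈ C`, which gives (b) and the uniqueness
in (c); conversely an ultrafilter `𝒰` equals `𝒰_C` for `C = {α | αΛ ∈ 𝒰}`, which is directed
because finite alignment writes `αΛ ∩ βΛ` as a finite union of tails.

For (a), the tails `βΛ` not in `𝒰_{C,0}` must miss some `αΛ` with `α ∈ C`; that is, a path
meeting every member of `C` must lie in `C`. For maximal `C` this follows by enumerating `C`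
and extending the path step by step, using finite alignment, through paths that still meet all
of `C`: the initial segments of the resulting chain form a directed set containing `C`.
-/

universe u v

/-- A category of paths: a small category (objects identified with identity
morphisms) with left and right cancellation and no inverses. -/
structure CategoryOfPaths (Λ : Type u) where
  s : Λ → Λ
  r : Λ → Λ
  comp : Λ → Λ → Λ
  s_comp : ∀ {α β : Λ}, s α = r β → s (comp α β) = s β
  r_comp : ∀ {α β : Λ}, s α = r β → r (comp α β) = r α
  comp_assoc : ∀ {α β γ : Λ}, s α = r β → s β = r γ →
    comp (comp α β) γ = comp α (comp β γ)
  id_comp : ∀ α : Λ, comp (r α) α = α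
  comp_id : ∀ α : Λ, comp α (s α) = α
  s_r : ∀ α : Λ, s (r α) = r α
  r_r : ∀ α : Λ, r (r α) = r α
  r_s : ∀ α : Λ, r (s α) = s α
  s_s : ∀ α : Λ, s (s α) = s α
  left_cancel : ∀ {α β γ : Λ}, s α = r β → s α = r γ → comp α β = comp α γ → β = γ
  right_cancel : ∀ {β γ α : Λ}, s β = r α → s γ = r α → comp β α = comp γ α → β = γ
  no_inverses : ∀ {α β : Λ}, s α = r β → comp α β = s β → α = s β ∧ β = s β

variable {Λ : Type u}

/-- The tail set `αΛ`. -/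
def pTail (C : CategoryOfPaths Λ) (α : Λ) : Set Λ :=
  {x | ∃ β, C.s α = C.r β ∧ x = C.comp α β}

/-- `vΛ`, the paths with range `v`. -/
def pRng (C : CategoryOfPaths Λ) (w : Λ) : Set Λ := {α | C.r α = w}

/-- `Λv`, the paths with source `v`. -/
def pSrc (C : CategoryOfPaths Λ) (w : Λ) : Set Λ := {α | C.s α = w}

/-- `[β]`, the initial segments of `β`. -/
def pSeg (C : CategoryOfPaths Λ) (β : Λ) : Set Λ := {α | β ∈ pTail C α}

/-- `α ⋔ β`. -/
def pMeets (C : CategoryOfPaths Λ) (α β : Λ) : Prop :=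
  (pTail C α ∩ pTail C β).Nonempty

/-- `αE`. -/
def pMulSet (C : CategoryOfPaths Λ) (α : Λ) (E : Set Λ) : Set Λ :=
  {x | ∃ β ∈ E, C.s α = C.r β ∧ x = C.comp α β}

/-- `σ^α(E ∩ αΛ)`, computed inside an ambient subcategory `S`. -/
def pShiftIn (C : CategoryOfPaths Λ) (S : Set Λ) (α : Λ) (E : Set Λ) : Set Λ :=
  {β | β ∈ S ∧ C.s α = C.r β ∧ C.comp α β ∈ E}

/-- `σ^α(E ∩ αΛ)`. -/
def pShift (C : CategoryOfPaths Λ) (α : Λ) (E : Set Λ) : Set Λ :=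
  {β | C.s α = C.r β ∧ C.comp α β ∈ E}

/-- `⋁F`: the minimal common extensions of `F`. -/
def pMinExt (C : CategoryOfPaths Λ) (F : Set Λ) : Set Λ :=
  {ε | (∀ α ∈ F, ε ∈ pTail C α) ∧
    ∀ γ, (∀ α ∈ F, γ ∈ pTail C α) → ε ∈ pTail C γ → γ = ε}

/-- `α ∨ β`: the minimal common extensions of `α` and `β`. -/
def pMinCE (C : CategoryOfPaths Λ) (α β : Λ) : Set Λ := pMinExt C {α, β}

/-- A subcategory of a category of paths, as a set of morphisms. -/
structure IsSubcategory (C : CategoryOfPaths Λ) (Λ₀ : Set Λ) : Prop where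
  comp_mem : ∀ {α β : Λ}, α ∈ Λ₀ → β ∈ Λ₀ → C.s α = C.r β → C.comp α β ∈ Λ₀
  s_mem : ∀ {α : Λ}, α ∈ Λ₀ → C.s α ∈ Λ₀
  r_mem : ∀ {α : Λ}, α ∈ Λ₀ → C.r α ∈ Λ₀

/-- A finitely aligned category of paths. -/
def FinitelyAligned (C : CategoryOfPaths Λ) : Prop :=
  ∀ α β : Λ, ∃ G : Set Λ, G.Finite ∧
    pTail C α ∩ pTail C β = ⋃ ε ∈ G, pTail C ε

/-- A finitely aligned relative category of paths `(Λ₀, Λ)`. -/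
def RelFinitelyAligned (C : CategoryOfPaths Λ) (Λ₀ : Set Λ) : Prop :=
  (∀ α ∈ Λ₀, ∀ β ∈ Λ₀, ∃ G : Set Λ, G.Finite ∧ G ⊆ Λ₀ ∧
      pTail C α ∩ pTail C β = ⋃ ε ∈ G, pTail C ε) ∧
  (∀ α ∈ Λ₀, pTail C α ∩ Λ₀ = pMulSet C α Λ₀)

/-- A ring of sets: contains `∅` and is closed under `∪`, `∩`, and `\`. -/
def IsSetRing {γ : Type v} (R : Set (Set γ)) : Prop :=
  ∅ ∈ R ∧ (∀ E ∈ R, ∀ F ∈ R, E ∪ F ∈ R) ∧ (∀ E ∈ R, ∀ F ∈ R, E ∩ F ∈ R) ∧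
    (∀ E ∈ R, ∀ F ∈ R, E \ F ∈ R)

/-- A ring of sets on `S`: a ring of sets all of whose members are subsets of `S`. -/
def IsSetRingOn {γ : Type v} (S : Set γ) (R : Set (Set γ)) : Prop :=
  IsSetRing R ∧ ∀ E ∈ R, E ⊆ S

/-- The ring of sets generated by a collection. -/
def setRingGen {γ : Type v} (G : Set (Set γ)) : Set (Set γ) :=
  ⋂₀ {R | IsSetRing R ∧ G ⊆ R}

/-- The ring of sets on `S` generated by a collection. -/
def setRingGenOn {γ : Type v} (S : Set γ) (G : Set (Set γ)) : Set (Set γ) :=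
  ⋂₀ {R | IsSetRingOn S R ∧ G ⊆ R}

/-- A zigzag: a list of pairs `(αᵢ, βᵢ)` with `r αᵢ = r βᵢ` and `s αᵢ₊₁ = s βᵢ`. -/
def IsZigzag (C : CategoryOfPaths Λ) (l : List (Λ × Λ)) : Prop :=
  (∀ p ∈ l, C.r p.1 = C.r p.2) ∧ l.Chain' (fun p q => C.s q.1 = C.s p.2)

/-- The (graph of the) zigzag map `φ_ζ = σ^{α₁} β₁ ⋯ σ^{αₙ} βₙ`, computed
inside an ambient subcategory `S`. -/
def zigzagRelIn (C : CategoryOfPaths Λ) (S : Set Λ) : List (Λ × Λ) → Λ → Λ → Prop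
  | [], x, y => x = y ∧ x ∈ S
  | p :: rest, x, y => ∃ z, zigzagRelIn C S rest x z ∧ C.s p.2 = C.r z ∧
      C.s p.1 = C.r y ∧ y ∈ S ∧ C.comp p.2 z = C.comp p.1 y

/-- `A(ζ)`: the domain of the zigzag map. -/
def zigzagDomIn (C : CategoryOfPaths Λ) (S : Set Λ) (l : List (Λ × Λ)) : Set Λ :=
  {x | ∃ y, zigzagRelIn C S l x y}

/-- `𝒟(Λ₀,Λ)⁰_v`: nonempty zigzag sets with entries in `Λ₀` and source `v`,
computed inside the ambient subcategory `S`. -/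
def relD0 (C : CategoryOfPaths Λ) (Λ₀ S : Set Λ) (w : Λ) : Set (Set Λ) :=
  {E | E.Nonempty ∧ ∃ (l : List (Λ × Λ)) (h : l ≠ []),
    IsZigzag C l ∧ (∀ p ∈ l, p.1 ∈ Λ₀ ∧ p.2 ∈ Λ₀) ∧
    C.s (l.getLast h).2 = w ∧ E = zigzagDomIn C S l}

/-- `𝒜(Λ₀,Λ)_v`: the ring of sets generated by the zigzag sets. -/
def relAring (C : CategoryOfPaths Λ) (Λ₀ S : Set Λ) (w : Λ) : Set (Set Λ) :=
  setRingGenOn {α | α ∈ S ∧ C.r α = w} (relD0 C Λ₀ S w)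

/-- A filter in a ring of sets. -/
def IsFilterIn {γ : Type v} (R U : Set (Set γ)) : Prop :=
  U.Nonempty ∧ U ⊆ R ∧ (∀ E ∈ U, E.Nonempty) ∧
    (∀ E ∈ U, ∀ F ∈ U, E ∩ F ∈ U) ∧ (∀ E ∈ U, ∀ F ∈ R, E ⊆ F → F ∈ U)

/-- An ultrafilter in a ring of sets: a maximal filter. -/
def IsUltrafilterIn {γ : Type v} (R U : Set (Set γ)) : Prop :=
  IsFilterIn R U ∧ ∀ V, IsFilterIn R V → U ⊆ V → V = U

/-- A filter base in a ring of sets. -/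
def IsFilterBaseIn {γ : Type v} (R B : Set (Set γ)) : Prop :=
  B.Nonempty ∧ B ⊆ R ∧ (∀ E ∈ B, E.Nonempty) ∧
    ∀ E ∈ B, ∀ F ∈ B, ∃ G ∈ B, G ⊆ E ∩ F

/-- The filter generated by a filter base. -/
def filterGenBy {γ : Type v} (R B : Set (Set γ)) : Set (Set γ) :=
  {E | E ∈ R ∧ ∃ F ∈ B, F ⊆ E}

/-- An ultrafilter base in a ring of sets. -/
def IsUltrafilterBaseIn {γ : Type v} (R B : Set (Set γ)) : Prop :=
  IsFilterBaseIn R B ∧ IsUltrafilterIn R (filterGenBy R B)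

/-- A Boolean ring homomorphism defined on a ring of sets `A` with values in a
generalized Boolean algebra. -/
def IsBRHomOn {γ : Type v} {R : Type*} [GeneralizedBooleanAlgebra R]
    (A : Set (Set γ)) (ν : Set γ → R) : Prop :=
  ν ∅ = ⊥ ∧ (∀ E ∈ A, ∀ F ∈ A, ν (E ∪ F) = ν E ⊔ ν F) ∧
    (∀ E ∈ A, ∀ F ∈ A, ν (E ∩ F) = ν E ⊓ ν F) ∧
    (∀ E ∈ A, ∀ F ∈ A, ν (E \ F) = ν E \ ν F)

/-- `𝒜_v`: the ring of sets on `vΛ` generated by the tail sets. -/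
def tailRing (C : CategoryOfPaths Λ) (w : Λ) : Set (Set Λ) :=
  setRingGenOn (pRng C w) {E | ∃ α, C.r α = w ∧ E = pTail C α}

/-- A directed subset. -/
def pDirected (C : CategoryOfPaths Λ) (x : Set Λ) : Prop :=
  ∀ α ∈ x, ∀ β ∈ x, (pTail C α ∩ pTail C β ∩ x).Nonempty

/-- A hereditary subset. -/
def pHereditary (C : CategoryOfPaths Λ) (x : Set Λ) : Prop :=
  ∀ γ ∈ x, ∀ α : Λ, γ ∈ pTail C α → α ∈ x

/-- `vΛ*`: the nonempty directed hereditary subsets of `vΛ`. -/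
def lamStar (C : CategoryOfPaths Λ) (w : Λ) : Set (Set Λ) :=
  {x | x.Nonempty ∧ x ⊆ pRng C w ∧ pDirected C x ∧ pHereditary C x}

/-- `vΛ**`: the maximal directed subsets of `vΛ`. -/
def lamStarStar (C : CategoryOfPaths Λ) (w : Λ) : Set (Set Λ) :=
  {x | x ⊆ pRng C w ∧ pDirected C x ∧
    ∀ y, y ⊆ pRng C w → pDirected C y → x ⊆ y → y = x}

/-- `αx = ⋃_{γ ∈ x} [αγ]` for `x ∈ s(α)Λ*`. -/
def pMulStar (C : CategoryOfPaths Λ) (α : Λ) (x : Set Λ) : Set Λ :=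
  {δ | ∃ γ ∈ x, C.s α = C.r γ ∧ C.comp α γ ∈ pTail C δ}

/-- `𝒰_{C,0}`. -/
def UC0 (C : CategoryOfPaths Λ) (w : Λ) (x : Set Λ) : Set (Set Λ) :=
  {E | E ∈ tailRing C w ∧ ∃ α ∈ x, pTail C α ⊆ E}

/-- `𝒰_C`. -/
def UC (C : CategoryOfPaths Λ) (w : Λ) (x : Set Λ) : Set (Set Λ) :=
  {E | E ∈ tailRing C w ∧ ∃ α ∈ x, x ∩ pTail C α ⊆ E}

/-- `X_v = vΛ*` as a type. -/
abbrev Xv (C : CategoryOfPaths Λ) (w : Λ) : Type u := {x : Set Λ // x ∈ lamStar C w}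

/-- The topology on `X_v` generated by the sets `Ê`, `E ∈ 𝒜_v`. -/
def XvTop (C : CategoryOfPaths Λ) (w : Λ) : TopologicalSpace (Xv C w) :=
  TopologicalSpace.generateFrom
    {t | ∃ E ∈ tailRing C w, t = {x : Xv C w | E ∈ UC C w x.1}}

/-- The vertices of `Λ`. -/
abbrev Vertex (C : CategoryOfPaths Λ) : Type u := {w : Λ // C.r w = w}

/-- `X`: the disjoint union of the spaces `X_v`. -/
abbrev Xtotal (C : CategoryOfPaths Λ) : Type u := Σ w : Vertex C, Xv C w.1

/-- The disjoint union topology on `X`. -/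
def XtotalTop (C : CategoryOfPaths Λ) : TopologicalSpace (Xtotal C) :=
  letI : ∀ w : Vertex C, TopologicalSpace (Xv C w.1) := fun w => XvTop C w.1
  inferInstance

/-- The boundary `∂Λ`: the closure of `Λ**` in `X`. -/
def boundarySet (C : CategoryOfPaths Λ) : Set (Xtotal C) :=
  @closure _ (XtotalTop C) {p : Xtotal C | p.2.1 ∈ lamStarStar C p.1.1}

/-- An exhaustive subset of `vΛ`. -/
def ExhaustiveAt (C : CategoryOfPaths Λ) (w : Λ) (F : Set Λ) : Prop :=
  ∀ α, C.r α = w → ∃ β ∈ F, pMeets C α β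

/-- An aperiodic point of `Λ*`. -/
def pAperiodic (C : CategoryOfPaths Λ) (x : Set Λ) : Prop :=
  ∀ α ∈ x, ∀ β ∈ x, α ≠ β → pShift C α x ≠ pShift C β x

/-- A right-aperiodic point of `wΛ*`. -/
def pRightAperiodicAt (C : CategoryOfPaths Λ) (w : Λ) (x : Set Λ) : Prop :=
  ∀ α β : Λ, C.s α = w → C.s β = w → α ≠ β → pMulStar C α x ≠ pMulStar C β x

/-- The triples `(α, β, x)` with `s α = s β` and `x ∈ s(α)Λ*`. -/
abbrev pTrip (C : CategoryOfPaths Λ) : Type u :=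
  {t : Λ × Λ × Set Λ // C.s t.1 = C.s t.2.1 ∧ t.2.2 ∈ lamStar C (C.s t.1)}

/-- The groupoid equivalence relation on triples. -/
def tripRel (C : CategoryOfPaths Λ) (t t' : pTrip C) : Prop :=
  ∃ (z : Set Λ) (δ δ' : Λ),
    z ∈ lamStar C (C.s δ) ∧ z ∈ lamStar C (C.s δ') ∧
    C.s t.1.1 = C.r δ ∧ C.s t'.1.1 = C.r δ' ∧
    t.1.2.2 = pMulStar C δ z ∧ t'.1.2.2 = pMulStar C δ' z ∧
    C.comp t.1.1 δ = C.comp t'.1.1 δ' ∧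
    C.comp t.1.2.1 δ = C.comp t'.1.2.1 δ'

/-- The ultrafilter space of `𝒜(Λ₀,Λ)_v`. -/
abbrev relXv (C : CategoryOfPaths Λ) (Λ₀ : Set Λ) (w : Λ) : Type u :=
  {U : Set (Set Λ) // IsUltrafilterIn (relAring C Λ₀ Set.univ w) U}

/-- The topology on the ultrafilter space of `𝒜(Λ₀,Λ)_v` generated by the `Ê`. -/
def relXvTop (C : CategoryOfPaths Λ) (Λ₀ : Set Λ) (w : Λ) :
    TopologicalSpace (relXv C Λ₀ w) :=
  TopologicalSpace.generateFrom
    {t | ∃ E ∈ relAring C Λ₀ Set.univ w, t = {U : relXv C Λ₀ w | E ∈ U.1}}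

section Paths

variable {C : CategoryOfPaths Λ}

lemma mem_pTail_self (C : CategoryOfPaths Λ) (α : Λ) : α ∈ pTail C α :=
  ⟨C.s α, (C.r_s α).symm, (C.comp_id α).symm⟩

lemma r_eq_of_mem_pTail {α β : Λ} (h : α ∈ pTail C β) : C.r α = C.r β := by
  obtain ⟨γ, hγ, rfl⟩ := h
  exact C.r_comp hγ

lemma pTail_subset_pTail {α β : Λ} (h : α ∈ pTail C β) : pTail C α ⊆ pTail C β := by
  obtain ⟨δ, hδ, rfl⟩ := h
  rintro _ ⟨ε, hε, rfl⟩
  have hδε : C.s δ = C.r ε := (C.s_comp hδ).symm.trans hε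
  exact ⟨C.comp δ ε, by rw [C.r_comp hδε]; exact hδ, C.comp_assoc hδ hδε⟩

lemma mem_pTail_trans {α β γ : Λ} (h₁ : α ∈ pTail C β) (h₂ : β ∈ pTail C γ) :
    α ∈ pTail C γ :=
  pTail_subset_pTail h₂ h₁

lemma eq_of_mem_pTail_of_mem_pTail {α β : Λ} (h₁ : α ∈ pTail C β) (h₂ : β ∈ pTail C α) :
    α = β := by
  obtain ⟨δ, hδ, rfl⟩ := h₁
  obtain ⟨ε, hε, hβ⟩ := h₂
  have hδε : C.s δ = C.r ε := (C.s_comp hδ).symm.trans hε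
  have hs : C.s β = C.s ε := by conv_lhs => rw [hβ, C.s_comp hε]
  have hloop : C.comp δ ε = C.s β := by
    refine C.left_cancel (by rw [C.r_comp hδε]; exact hδ) (C.r_s β).symm ?_
    rw [C.comp_id, ← C.comp_assoc hδ hδε, ← hβ]
  rw [(C.no_inverses hδε (hloop.trans hs)).1, ← hs, C.comp_id]

end Paths

section SetRing

variable {γ : Type v} {S : Set γ} {G : Set (Set γ)}

lemma subset_setRingGenOn : G ⊆ setRingGenOn S G :=
  fun _ hE => Set.mem_sInter.2 fun _ hR => hR.2 hE

lemma mem_setRingGenOn_iff {E : Set γ} :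
    E ∈ setRingGenOn S G ↔ ∀ R, IsSetRingOn S R → G ⊆ R → E ∈ R := by
  simp [setRingGenOn, and_imp]

lemma isSetRingOn_powerset (S : Set γ) : IsSetRingOn S {E | E ⊆ S} :=
  ⟨⟨Set.empty_subset S, fun _ hE _ hF => Set.union_subset hE hF,
    fun _ hE _ _ => Set.inter_subset_left.trans hE, fun _ hE _ _ => Set.sdiff_subset.trans hE⟩,
    fun _ hE => hE⟩

lemma isSetRingOn_setRingGenOn (hG : ∀ E ∈ G, E ⊆ S) : IsSetRingOn S (setRingGenOn S G) := by
  simp only [IsSetRingOn, IsSetRing, mem_setRingGenOn_iff]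
  refine ⟨⟨fun R hR _ => hR.1.1,
    fun E hE F hF R hR hGR => hR.1.2.1 E (hE R hR hGR) F (hF R hR hGR),
    fun E hE F hF R hR hGR => hR.1.2.2.1 E (hE R hR hGR) F (hF R hR hGR),
    fun E hE F hF R hR hGR => hR.1.2.2.2 E (hE R hR hGR) F (hF R hR hGR)⟩,
    fun E hE => hE _ (isSetRingOn_powerset S) hG⟩

lemma setRingGenOn_induction (hG : ∀ E ∈ G, E ⊆ S) {P : Set γ → Prop} (empty : P ∅)
    (basic : ∀ E ∈ G, P E)
    (union : ∀ E ∈ setRingGenOn S G, ∀ F ∈ setRingGenOn S G, P E → P F → P (E ∪ F))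
    (inter : ∀ E ∈ setRingGenOn S G, ∀ F ∈ setRingGenOn S G, P E → P F → P (E ∩ F))
    (diff : ∀ E ∈ setRingGenOn S G, ∀ F ∈ setRingGenOn S G, P E → P F → P (E \ F))
    {E : Set γ} (hE : E ∈ setRingGenOn S G) : P E := by
  obtain ⟨⟨hempty, hunion, hinter, hdiff⟩, hsub⟩ := isSetRingOn_setRingGenOn hG
  have hring : IsSetRingOn S {E | E ∈ setRingGenOn S G ∧ P E} :=
    ⟨⟨⟨hempty, empty⟩, fun E hE F hF => ⟨hunion E hE.1 F hF.1, union E hE.1 F hF.1 hE.2 hF.2⟩,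
      fun E hE F hF => ⟨hinter E hE.1 F hF.1, inter E hE.1 F hF.1 hE.2 hF.2⟩,
      fun E hE F hF => ⟨hdiff E hE.1 F hF.1, diff E hE.1 F hF.1 hE.2 hF.2⟩⟩,
      fun E hE => hsub E hE.1⟩
  exact (mem_setRingGenOn_iff.1 hE _ hring fun F hF => ⟨subset_setRingGenOn hF, basic F hF⟩).2

end SetRing

section FilterIn

variable {γ : Type v} {S : Set γ} {G R U V : Set (Set γ)} {E F : Set γ}

lemma IsSetRing.toMeasureTheory (hR : IsSetRing R) : MeasureTheory.IsSetRing R :=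
  ⟨hR.1, fun _ _ hE hF => hR.2.1 _ hE _ hF, fun _ _ hE hF => hR.2.2.2 _ hE _ hF⟩

lemma IsFilterIn.empty_notMem (hU : IsFilterIn R U) : ∅ ∉ U :=
  fun h => (hU.2.2.1 ∅ h).ne_empty rfl

lemma IsFilterIn.mem_of_subset (hU : IsFilterIn R U) (hE : E ∈ U) (hF : F ∈ R) (hEF : E ⊆ F) :
    F ∈ U :=
  hU.2.2.2.2 E hE F hF hEF

lemma IsFilterIn.inter_mem_iff (hU : IsFilterIn R U) (hE : E ∈ R) (hF : F ∈ R) :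
    E ∩ F ∈ U ↔ E ∈ U ∧ F ∈ U :=
  ⟨fun h => ⟨hU.mem_of_subset h hE Set.inter_subset_left,
    hU.mem_of_subset h hF Set.inter_subset_right⟩, fun h => hU.2.2.2.1 E h.1 F h.2⟩

lemma IsFilterIn.not_disjoint (hU : IsFilterIn R U) (hE : E ∈ U) (hF : F ∈ U) :
    ¬Disjoint E F :=
  Set.not_disjoint_iff_nonempty_inter.2 (hU.2.2.1 _ (hU.2.2.2.1 E hE F hF))

lemma IsFilterIn.isUltrafilterIn_of_forall_mem_or_disjoint (hU : IsFilterIn R U)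
    (h : ∀ E ∈ R, E ∈ U ∨ ∃ F ∈ U, Disjoint F E) : IsUltrafilterIn R U := by
  refine ⟨hU, fun V hV hUV => Set.Subset.antisymm (fun E hE => ?_) hUV⟩
  obtain hEU | ⟨F, hF, hFE⟩ := h E (hV.2.1 hE)
  · exact hEU
  · exact absurd hFE (hV.not_disjoint (hUV hF) hE)

lemma IsFilterIn.isUltrafilterIn_setRingGenOn (hG : ∀ E ∈ G, E ⊆ S)
    (hU : IsFilterIn (setRingGenOn S G) U) (h : ∀ E ∈ G, E ∈ U ∨ ∃ F ∈ U, Disjoint F E) :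
    IsUltrafilterIn (setRingGenOn S G) U := by
  obtain ⟨⟨-, hunion, -, hdiff⟩, -⟩ := isSetRingOn_setRingGenOn hG
  refine hU.isUltrafilterIn_of_forall_mem_or_disjoint fun E hE =>
    setRingGenOn_induction (P := fun E => E ∈ U ∨ ∃ F ∈ U, Disjoint F E) hG ?_ h ?_ ?_ ?_ hE
  · obtain ⟨F, hF⟩ := hU.1
    exact Or.inr ⟨F, hF, Set.disjoint_empty F⟩
  · rintro E hE F hF (hEU | ⟨A, hA, hAE⟩) hFi
    · exact Or.inl (hU.mem_of_subset hEU (hunion E hE F hF) Set.subset_union_left)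
    obtain hFU | ⟨B, hB, hBF⟩ := hFi
    · exact Or.inl (hU.mem_of_subset hFU (hunion E hE F hF) Set.subset_union_right)
    · exact Or.inr ⟨A ∩ B, hU.2.2.2.1 A hA B hB,
        (hAE.mono_left Set.inter_subset_left).union_right (hBF.mono_left Set.inter_subset_right)⟩
  · rintro E hE F hF (hEU | ⟨A, hA, hAE⟩) (hFU | ⟨B, hB, hBF⟩)
    · exact Or.inl (hU.2.2.2.1 E hEU F hFU)
    · exact Or.inr ⟨B, hB, hBF.mono_right Set.inter_subset_right⟩
    all_goals exact Or.inr ⟨A, hA, hAE.mono_right Set.inter_subset_left⟩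
  · rintro E hE F hF (hEU | ⟨A, hA, hAE⟩) (hFU | ⟨B, hB, hBF⟩)
    · exact Or.inr ⟨F, hFU, Set.disjoint_sdiff_right⟩
    · refine Or.inl (hU.mem_of_subset (hU.2.2.2.1 E hEU B hB) (hdiff E hE F hF) ?_)
      exact fun z hz => ⟨hz.1, Set.disjoint_left.1 hBF hz.2⟩
    all_goals exact Or.inr ⟨A, hA, hAE.mono_right Set.sdiff_subset⟩

lemma IsUltrafilterIn.mem_or_exists_disjoint (hR : IsSetRing R) (hU : IsUltrafilterIn R U)
    (hE : E ∈ R) : E ∈ U ∨ ∃ F ∈ U, Disjoint F E := by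
  by_contra! h
  obtain ⟨hEU, hmeets⟩ := h
  obtain ⟨F₀, hF₀⟩ := hU.1.1
  have hV : IsFilterIn R {B | B ∈ R ∧ ∃ F ∈ U, E ∩ F ⊆ B} := by
    refine ⟨⟨E, hE, F₀, hF₀, Set.inter_subset_left⟩, fun B hB => hB.1, ?_, ?_, ?_⟩
    · rintro B ⟨-, F, hF, hFB⟩
      rw [Set.inter_comm] at hFB
      exact (Set.not_disjoint_iff_nonempty_inter.1 (hmeets F hF)).mono hFB
    · rintro B₁ ⟨hB₁, F₁, hF₁, h₁⟩ B₂ ⟨hB₂, F₂, hF₂, h₂⟩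
      exact ⟨hR.2.2.1 _ hB₁ _ hB₂, F₁ ∩ F₂, hU.1.2.2.2.1 F₁ hF₁ F₂ hF₂,
        fun z hz => ⟨h₁ ⟨hz.1, hz.2.1⟩, h₂ ⟨hz.1, hz.2.2⟩⟩⟩
    · rintro B ⟨-, F, hF, hFB⟩ B' hB' hBB'
      exact ⟨hB', F, hF, hFB.trans hBB'⟩
  have hUV : U ⊆ {B | B ∈ R ∧ ∃ F ∈ U, E ∩ F ⊆ B} :=
    fun F hF => ⟨hU.1.2.1 hF, F, hF, Set.inter_subset_right⟩
  exact hEU (hU.2 _ hV hUV ▸ ⟨hE, F₀, hF₀, Set.inter_subset_left⟩)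

lemma IsUltrafilterIn.union_mem_iff (hR : IsSetRing R) (hU : IsUltrafilterIn R U)
    (hE : E ∈ R) (hF : F ∈ R) : E ∪ F ∈ U ↔ E ∈ U ∨ F ∈ U := by
  refine ⟨fun h => ?_, fun h => h.elim
    (fun hEU => hU.1.mem_of_subset hEU (hR.2.1 E hE F hF) Set.subset_union_left)
    (fun hFU => hU.1.mem_of_subset hFU (hR.2.1 E hE F hF) Set.subset_union_right)⟩
  by_contra! hEF
  obtain hEU | ⟨A, hA, hAE⟩ := hU.mem_or_exists_disjoint hR hE
  · exact hEF.1 hEU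
  obtain hFU | ⟨B, hB, hBF⟩ := hU.mem_or_exists_disjoint hR hF
  · exact hEF.2 hFU
  exact hU.1.not_disjoint (hU.1.2.2.2.1 A hA B hB) h
    ((hAE.mono_left Set.inter_subset_left).union_right (hBF.mono_left Set.inter_subset_right))

lemma IsUltrafilterIn.diff_mem_iff (hR : IsSetRing R) (hU : IsUltrafilterIn R U)
    (hE : E ∈ R) (hF : F ∈ R) : E \ F ∈ U ↔ E ∈ U ∧ F ∉ U := by
  constructor
  · exact fun h => ⟨hU.1.mem_of_subset h hE Set.sdiff_subset,
      fun hFU => hU.1.not_disjoint hFU h Set.disjoint_sdiff_right⟩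
  · rintro ⟨hEU, hFU⟩
    rw [← Set.sdiff_union_inter E F, hU.union_mem_iff hR (hR.2.2.2 _ hE _ hF)
      (hR.2.2.1 _ hE _ hF)] at hEU
    exact hEU.resolve_right fun h => hFU (hU.1.mem_of_subset h hF Set.inter_subset_right)

lemma IsUltrafilterIn.exists_mem_of_biUnion_mem (hR : IsSetRing R) (hU : IsUltrafilterIn R U)
    {ι : Type*} {s : Set ι} (hs : s.Finite) {f : ι → Set γ} (hf : ∀ i ∈ s, f i ∈ R)
    (h : ⋃ i ∈ s, f i ∈ U) : ∃ i ∈ s, f i ∈ U := by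
  classical
  lift s to Finset ι using hs
  simp only [Finset.mem_coe] at hf h ⊢
  induction s using Finset.induction with
  | empty =>
    simp only [Finset.notMem_empty, Set.iUnion_of_empty, Set.iUnion_empty] at h
    exact absurd h hU.1.empty_notMem
  | insert i s _ ih =>
    rw [Finset.set_biUnion_insert] at h
    have hs : ∀ j ∈ s, f j ∈ R := fun j hj => hf j (Finset.mem_insert_of_mem hj)
    rcases (hU.union_mem_iff hR (hf i (Finset.mem_insert_self i s))
      (hR.toMeasureTheory.biUnion_mem s hs)).1 h with hi | hs'
    · exact ⟨i, Finset.mem_insert_self i s, hi⟩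
    · obtain ⟨j, hj, hjU⟩ := ih hs hs'
      exact ⟨j, Finset.mem_insert_of_mem hj, hjU⟩

lemma IsUltrafilterIn.eq_of_forall_mem_iff (hG : ∀ E ∈ G, E ⊆ S)
    (hU : IsUltrafilterIn (setRingGenOn S G) U) (hV : IsUltrafilterIn (setRingGenOn S G) V)
    (h : ∀ E ∈ G, E ∈ U ↔ E ∈ V) : U = V := by
  have hR := (isSetRingOn_setRingGenOn hG).1
  have key : ∀ E ∈ setRingGenOn S G, E ∈ U ↔ E ∈ V := fun E hE =>
    setRingGenOn_induction (P := fun E => E ∈ U ↔ E ∈ V) hG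
      (iff_of_false hU.1.empty_notMem hV.1.empty_notMem) h
      (fun E hE F hF hEi hFi => by
        rw [hU.union_mem_iff hR hE hF, hV.union_mem_iff hR hE hF, hEi, hFi])
      (fun E hE F hF hEi hFi => by
        rw [hU.1.inter_mem_iff hE hF, hV.1.inter_mem_iff hE hF, hEi, hFi])
      (fun E hE F hF hEi hFi => by
        rw [hU.diff_mem_iff hR hE hF, hV.diff_mem_iff hR hE hF, hEi, hFi]) hE
  exact Set.ext fun E => ⟨fun hE => (key E (hU.1.2.1 hE)).1 hE,
    fun hE => (key E (hV.1.2.1 hE)).2 hE⟩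

lemma IsUltrafilterIn.exists_generator_mem (hG : ∀ E ∈ G, E ⊆ S)
    (hU : IsUltrafilterIn (setRingGenOn S G) U) : ∃ E ∈ G, E ∈ U := by
  have hR := (isSetRingOn_setRingGenOn hG).1
  obtain ⟨E, hE⟩ := hU.1.1
  refine setRingGenOn_induction (P := fun E => E ∈ U → ∃ E' ∈ G, E' ∈ U) hG
    (fun h => absurd h hU.1.empty_notMem) (fun E hE hEU => ⟨E, hE, hEU⟩) ?_ ?_ ?_
    (hU.1.2.1 hE) hE
  · intro E hE F hF hEi hFi h
    exact ((hU.union_mem_iff hR hE hF).1 h).elim hEi hFi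
  · exact fun E hE F hF hEi _ h => hEi ((hU.1.inter_mem_iff hE hF).1 h).1
  · exact fun E hE F hF hEi _ h => hEi ((hU.diff_mem_iff hR hE hF).1 h).1

end FilterIn

section TailRing

variable {C : CategoryOfPaths Λ} {v : Λ} {x : Set Λ}

lemma pTail_subset_pRng {α : Λ} (hα : C.r α = v) : pTail C α ⊆ pRng C v :=
  fun _ hβ => (r_eq_of_mem_pTail hβ).trans hα

lemma pTail_generators_subset_pRng :
    ∀ E ∈ {E | ∃ α, C.r α = v ∧ E = pTail C α}, E ⊆ pRng C v := by
  rintro _ ⟨α, hα, rfl⟩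
  exact pTail_subset_pRng hα

lemma isSetRing_tailRing : IsSetRing (tailRing C v) :=
  (isSetRingOn_setRingGenOn pTail_generators_subset_pRng).1

lemma pTail_mem_tailRing {α : Λ} (hα : C.r α = v) : pTail C α ∈ tailRing C v :=
  subset_setRingGenOn ⟨α, hα, rfl⟩

lemma UC_isFilterIn (hx : x ∈ lamStar C v) : IsFilterIn (tailRing C v) (UC C v x) := by
  obtain ⟨⟨α₀, hα₀⟩, hxv, hdir, -⟩ := hx
  refine ⟨⟨pTail C α₀, pTail_mem_tailRing (hxv hα₀), α₀, hα₀, Set.inter_subset_right⟩,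
    fun E hE => hE.1, ?_, ?_, ?_⟩
  · rintro E ⟨-, α, hα, hαE⟩
    exact ⟨α, hαE ⟨hα, mem_pTail_self C α⟩⟩
  · rintro E ⟨hE, α, hα, hαE⟩ F ⟨hF, β, hβ, hβF⟩
    obtain ⟨γ, ⟨hγα, hγβ⟩, hγx⟩ := hdir α hα β hβ
    exact ⟨isSetRing_tailRing.2.2.1 E hE F hF, γ, hγx, fun z hz =>
      ⟨hαE ⟨hz.1, pTail_subset_pTail hγα hz.2⟩, hβF ⟨hz.1, pTail_subset_pTail hγβ hz.2⟩⟩⟩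
  · rintro E ⟨-, α, hα, hαE⟩ F hF hEF
    exact ⟨hF, α, hα, hαE.trans hEF⟩

lemma UC0_isFilterIn (hx : x ∈ lamStar C v) : IsFilterIn (tailRing C v) (UC0 C v x) := by
  obtain ⟨⟨α₀, hα₀⟩, hxv, hdir, -⟩ := hx
  refine ⟨⟨pTail C α₀, pTail_mem_tailRing (hxv hα₀), α₀, hα₀, subset_rfl⟩,
    fun E hE => hE.1, ?_, ?_, ?_⟩
  · rintro E ⟨-, α, -, hαE⟩
    exact ⟨α, hαE (mem_pTail_self C α)⟩
  · rintro E ⟨hE, α, hα, hαE⟩ F ⟨hF, β, hβ, hβF⟩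
    obtain ⟨γ, ⟨hγα, hγβ⟩, hγx⟩ := hdir α hα β hβ
    exact ⟨isSetRing_tailRing.2.2.1 E hE F hF, γ, hγx, fun z hz =>
      ⟨hαE (pTail_subset_pTail hγα hz), hβF (pTail_subset_pTail hγβ hz)⟩⟩
  · rintro E ⟨-, α, hα, hαE⟩ F hF hEF
    exact ⟨hF, α, hα, hαE.trans hEF⟩

lemma pTail_mem_UC_iff (hx : x ∈ lamStar C v) {α : Λ} (hα : C.r α = v) :
    pTail C α ∈ UC C v x ↔ α ∈ x := by
  refine ⟨fun ⟨_, β, hβ, hβα⟩ => hx.2.2.2 β hβ α (hβα ⟨hβ, mem_pTail_self C β⟩),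
    fun h => ⟨pTail_mem_tailRing hα, α, h, Set.inter_subset_right⟩⟩

lemma UC_injOn : Set.InjOn (UC C v) (lamStar C v) := by
  intro x hx y hy hxy
  ext α
  constructor
  · exact fun h => (pTail_mem_UC_iff hy (hx.2.1 h)).1 (hxy ▸ (pTail_mem_UC_iff hx (hx.2.1 h)).2 h)
  · exact fun h => (pTail_mem_UC_iff hx (hy.2.1 h)).1 (hxy ▸ (pTail_mem_UC_iff hy (hy.2.1 h)).2 h)

lemma UC_isUltrafilterIn (hx : x ∈ lamStar C v) : IsUltrafilterIn (tailRing C v) (UC C v x) := by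
  refine (UC_isFilterIn hx).isUltrafilterIn_setRingGenOn pTail_generators_subset_pRng ?_
  rintro _ ⟨β, hβ, rfl⟩
  by_cases hβx : β ∈ x
  · exact Or.inl ((pTail_mem_UC_iff hx hβ).2 hβx)
  obtain ⟨α, hα⟩ := hx.1
  refine Or.inr ⟨pTail C α \ pTail C β, ⟨isSetRing_tailRing.2.2.2 _ (pTail_mem_tailRing
    (hx.2.1 hα)) _ (pTail_mem_tailRing hβ), α, hα, fun z hz => ⟨hz.2, fun hzβ => ?_⟩⟩,
    Set.disjoint_sdiff_left⟩
  exact hβx (hx.2.2.2 z hz.1 β hzβ)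

lemma exists_UC_eq_principal_iff (hx : x ∈ lamStar C v) :
    (∃ γ, C.r γ = v ∧ UC C v x = {E | E ∈ tailRing C v ∧ γ ∈ E}) ↔
      ∃ m ∈ x, ∀ γ ∈ x, γ ∈ pTail C m → γ = m := by
  constructor
  · rintro ⟨γ, hγ, hUC⟩
    have hγx : γ ∈ x := (pTail_mem_UC_iff hx hγ).1 (hUC ▸ ⟨pTail_mem_tailRing hγ,
      mem_pTail_self C γ⟩)
    refine ⟨γ, hγx, fun δ hδx hδγ => eq_of_mem_pTail_of_mem_pTail hδγ ?_⟩
    have hδ : pTail C δ ∈ UC C v x := (pTail_mem_UC_iff hx (hx.2.1 hδx)).2 hδx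
    rw [hUC] at hδ
    exact hδ.2
  · rintro ⟨m, hmx, hm⟩
    refine ⟨m, hx.2.1 hmx, Set.ext fun E => ⟨?_, fun ⟨hE, hmE⟩ =>
      ⟨hE, m, hmx, fun z hz => hm z hz.1 hz.2 ▸ hmE⟩⟩⟩
    rintro ⟨hE, α, hα, hαE⟩
    obtain ⟨γ, ⟨hγα, hγm⟩, hγx⟩ := hx.2.2.1 α hα m hmx
    exact ⟨hE, hm γ hγx hγm ▸ hαE ⟨hγx, hγα⟩⟩

end TailRing

section MaximalDirected

variable {C : CategoryOfPaths Λ} {v : Λ} {x : Set Λ}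

lemma pDirected.exists_mem_pTail_forall (hdir : pDirected C x) (hx : x.Nonempty) {ι : Type*}
    [Finite ι] (f : ι → Λ) (hf : ∀ i, f i ∈ x) : ∃ a ∈ x, ∀ i, a ∈ pTail C (f i) := by
  have : Nonempty x := hx.to_subtype
  have hdir' : Directed (· ⊇ ·) fun a : x => pTail C a := fun a b =>
    let ⟨c, ⟨hca, hcb⟩, hcx⟩ := hdir a a.2 b b.2
    ⟨⟨c, hcx⟩, pTail_subset_pTail hca, pTail_subset_pTail hcb⟩
  obtain ⟨a, ha⟩ := hdir'.finite_le fun i => (⟨f i, hf i⟩ : x)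
  exact ⟨a, a.2, fun i => ha i (mem_pTail_self C a)⟩

lemma r_eq_of_pMeets {α β : Λ} (h : pMeets C α β) : C.r α = C.r β :=
  let ⟨_, hγα, hγβ⟩ := h
  (r_eq_of_mem_pTail hγα).symm.trans (r_eq_of_mem_pTail hγβ)

lemma setOf_exists_mem_pTail_mem_lamStar {y : Set Λ} (hne : y.Nonempty) (hyv : y ⊆ pRng C v)
    (hdir : pDirected C y) : {α | ∃ δ ∈ y, δ ∈ pTail C α} ∈ lamStar C v := by
  obtain ⟨δ₀, hδ₀⟩ := hne
  refine ⟨⟨δ₀, δ₀, hδ₀, mem_pTail_self C δ₀⟩, ?_, ?_, ?_⟩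
  · rintro α ⟨δ, hδ, hδα⟩
    exact (r_eq_of_mem_pTail hδα).symm.trans (hyv hδ)
  · rintro α ⟨δ, hδ, hδα⟩ β ⟨ε, hε, hεβ⟩
    obtain ⟨γ, ⟨hγδ, hγε⟩, hγy⟩ := hdir δ hδ ε hε
    exact ⟨γ, ⟨mem_pTail_trans hγδ hδα, mem_pTail_trans hγε hεβ⟩, γ, hγy, mem_pTail_self C γ⟩
  · rintro γ ⟨δ, hδ, hδγ⟩ α hγα
    exact ⟨δ, hδ, mem_pTail_trans hδγ hγα⟩

lemma mem_lamStarStar_of_isUltrafilterIn_UC0 (hx : x ∈ lamStar C v)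
    (hU : IsUltrafilterIn (tailRing C v) (UC0 C v x)) : x ∈ lamStarStar C v := by
  refine ⟨hx.2.1, hx.2.2.1, fun y hyv hdir hxy => Set.Subset.antisymm ?_ hxy⟩
  have hy' := setOf_exists_mem_pTail_mem_lamStar (hx.1.mono hxy) hyv hdir
  have hyy' : y ⊆ {α | ∃ δ ∈ y, δ ∈ pTail C α} := fun δ hδ => ⟨δ, hδ, mem_pTail_self C δ⟩
  have hUC : UC C v {α | ∃ δ ∈ y, δ ∈ pTail C α} = UC0 C v x :=
    hU.2 _ (UC_isFilterIn hy') fun E ⟨hE, α, hα, hαE⟩ =>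
      ⟨hE, α, hyy' (hxy hα), fun z hz => hαE hz.2⟩
  intro δ hδ
  have hδU := (pTail_mem_UC_iff hy' (hyv hδ)).2 (hyy' hδ)
  rw [hUC] at hδU
  obtain ⟨-, α, hα, hαδ⟩ := hδU
  exact hx.2.2.2 α hα δ (hαδ (mem_pTail_self C α))

/-- Finite alignment splits `δΛ ∩ θΛ` into finitely many tails `εΛ`; if none of them met all
of `x`, a common extension in `x` of `θ` and of witnesses for each `ε` would miss `δ`. -/
lemma exists_mem_pTail_forall_pMeets (hfa : FinitelyAligned C) (hx : x ∈ lamStar C v)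
    {δ θ : Λ} (hδ : ∀ α ∈ x, pMeets C δ α) (hθ : θ ∈ x) :
    ∃ ε ∈ pTail C δ ∩ pTail C θ, ∀ α ∈ x, pMeets C ε α := by
  obtain ⟨G, hG, hGeq⟩ := hfa δ θ
  by_contra! h
  have hG' : ∀ ε : G, ∃ α ∈ x, ¬pMeets C ε α := fun ε =>
    h ε (hGeq ▸ Set.mem_biUnion ε.2 (mem_pTail_self C ε))
  choose g hgx hg using hG'
  have : Finite G := hG.to_subtype
  obtain ⟨a, hax, ha⟩ := hx.2.2.1.exists_mem_pTail_forall hx.1 (fun o : Option G => o.elim θ g)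
    fun o => by cases o <;> simp [hθ, hgx]
  obtain ⟨η, hηδ, hηa⟩ := hδ a hax
  have hηθ : η ∈ pTail C δ ∩ pTail C θ := ⟨hηδ, mem_pTail_trans hηa (ha none)⟩
  rw [hGeq] at hηθ
  obtain ⟨ε, hεG, hηε⟩ := Set.mem_iUnion₂.1 hηθ
  exact hg ⟨ε, hεG⟩ ⟨η, hηε, mem_pTail_trans hηa (ha (some ⟨ε, hεG⟩))⟩

lemma mem_of_forall_pMeets [Countable Λ] (hfa : FinitelyAligned C) (hx : x ∈ lamStar C v)
    (hmax : x ∈ lamStarStar C v) {β : Λ} (hβ : ∀ α ∈ x, pMeets C β α) : β ∈ x := by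
  obtain ⟨f, rfl⟩ := (Set.to_countable x).exists_eq_range hx.1
  have step (n : ℕ) (δ : {δ // ∀ α ∈ Set.range f, pMeets C δ α}) :
      ∃ ε : {ε // ∀ α ∈ Set.range f, pMeets C ε α}, ε.1 ∈ pTail C δ.1 ∧ ε.1 ∈ pTail C (f n) :=
    let ⟨ε, hε, hεx⟩ := exists_mem_pTail_forall_pMeets hfa hx δ.2 (Set.mem_range_self n)
    ⟨⟨ε, hεx⟩, hε⟩
  choose next hnext using step
  let d (n : ℕ) : Λ := (Nat.rec ⟨β, hβ⟩ next n : {δ // ∀ α ∈ Set.range f, pMeets C δ α}).1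
  have hd_succ (n : ℕ) : d (n + 1) ∈ pTail C (d n) ∧ d (n + 1) ∈ pTail C (f n) := hnext n _
  have hd_mono {m n : ℕ} (hmn : m ≤ n) : d n ∈ pTail C (d m) := by
    induction n, hmn using Nat.le_induction with
    | base => exact mem_pTail_self C (d m)
    | succ n _ ih => exact mem_pTail_trans (hd_succ n).1 ih
  have hd_rng (n : ℕ) : C.r (d n) = v :=
    (r_eq_of_pMeets ((Nat.rec ⟨β, hβ⟩ next n : {δ // ∀ α ∈ Set.range f, pMeets C δ α}).2
      (f 0) (Set.mem_range_self 0))).trans (hx.2.1 (Set.mem_range_self 0))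
  have hD : (⋃ n, pSeg C (d n)) = Set.range f := by
    refine hmax.2.2 _ ?_ ?_ ?_
    · rintro α ⟨_, ⟨n, rfl⟩, hα⟩
      exact (r_eq_of_mem_pTail hα).symm.trans (hd_rng n)
    · rintro α ⟨_, ⟨m, rfl⟩, hα⟩ γ ⟨_, ⟨n, rfl⟩, hγ⟩
      exact ⟨d (max m n), ⟨mem_pTail_trans (hd_mono (le_max_left m n)) hα,
        mem_pTail_trans (hd_mono (le_max_right m n)) hγ⟩,
        Set.mem_iUnion.2 ⟨max m n, mem_pTail_self C _⟩⟩
    · rintro _ ⟨n, rfl⟩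
      exact Set.mem_iUnion.2 ⟨n + 1, (hd_succ n).2⟩
  exact hD ▸ Set.mem_iUnion.2 ⟨0, mem_pTail_self C β⟩

lemma UC0_isUltrafilterIn_of_mem_lamStarStar [Countable Λ] (hfa : FinitelyAligned C)
    (hx : x ∈ lamStar C v) (hmax : x ∈ lamStarStar C v) :
    IsUltrafilterIn (tailRing C v) (UC0 C v x) := by
  refine (UC0_isFilterIn hx).isUltrafilterIn_setRingGenOn pTail_generators_subset_pRng ?_
  rintro _ ⟨β, hβ, rfl⟩
  by_cases hmeets : ∀ α ∈ x, pMeets C β α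
  · exact Or.inl ⟨pTail_mem_tailRing hβ, β, mem_of_forall_pMeets hfa hx hmax hmeets, subset_rfl⟩
  obtain ⟨α, hα, hαβ⟩ := not_forall₂.1 hmeets
  exact Or.inr ⟨pTail C α, ⟨pTail_mem_tailRing (hx.2.1 hα), α, hα, subset_rfl⟩,
    (Set.disjoint_iff_inter_eq_empty.2 (Set.not_nonempty_iff_eq_empty.1 hαβ)).symm⟩

end MaximalDirected

section Ultrafilters

variable {C : CategoryOfPaths Λ} {v : Λ} {U : Set (Set Λ)}

lemma setOf_pTail_mem_mem_lamStar (hfa : FinitelyAligned C)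
    (hU : IsUltrafilterIn (tailRing C v) U) :
    {α | C.r α = v ∧ pTail C α ∈ U} ∈ lamStar C v := by
  refine ⟨?_, fun α hα => hα.1, ?_, ?_⟩
  · obtain ⟨_, ⟨α, hα, rfl⟩, hαU⟩ := hU.exists_generator_mem pTail_generators_subset_pRng
    exact ⟨α, hα, hαU⟩
  · rintro α ⟨hα, hαU⟩ β ⟨-, hβU⟩
    obtain ⟨G, hG, hGeq⟩ := hfa α β
    have hGαβ : ∀ ε ∈ G, ε ∈ pTail C α ∩ pTail C β := fun ε hε =>
      hGeq ▸ Set.mem_biUnion hε (mem_pTail_self C ε)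
    have hεv : ∀ ε ∈ G, C.r ε = v := fun ε hε => (r_eq_of_mem_pTail (hGαβ ε hε).1).trans hα
    have hαβU := hU.1.2.2.2.1 _ hαU _ hβU
    rw [hGeq] at hαβU
    obtain ⟨ε, hεG, hεU⟩ := hU.exists_mem_of_biUnion_mem isSetRing_tailRing hG
      (fun ε hε => pTail_mem_tailRing (hεv ε hε)) hαβU
    exact ⟨ε, hGαβ ε hεG, hεv ε hεG, hεU⟩
  · rintro γ ⟨hγ, hγU⟩ α hγα
    have hα : C.r α = v := (r_eq_of_mem_pTail hγα).symm.trans hγ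
    exact ⟨hα, hU.1.mem_of_subset hγU (pTail_mem_tailRing hα) (pTail_subset_pTail hγα)⟩

lemma eq_UC_setOf_pTail_mem (hfa : FinitelyAligned C) (hU : IsUltrafilterIn (tailRing C v) U) :
    U = UC C v {α | C.r α = v ∧ pTail C α ∈ U} := by
  have hy := setOf_pTail_mem_mem_lamStar hfa hU
  refine hU.eq_of_forall_mem_iff pTail_generators_subset_pRng (UC_isUltrafilterIn hy) ?_
  rintro _ ⟨α, hα, rfl⟩
  rw [pTail_mem_UC_iff hy hα]
  exact ⟨fun h => ⟨hα, h⟩, fun h => h.2⟩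

lemma existsUnique_eq_UC (hfa : FinitelyAligned C) (hU : IsUltrafilterIn (tailRing C v) U) :
    ∃! y : Set Λ, y ∈ lamStar C v ∧ U = UC C v y :=
  ⟨_, ⟨setOf_pTail_mem_mem_lamStar hfa hU, eq_UC_setOf_pTail_mem hfa hU⟩,
    fun _ ⟨hy, hUy⟩ => UC_injOn hy (setOf_pTail_mem_mem_lamStar hfa hU)
      (hUy.symm.trans (eq_UC_setOf_pTail_mem hfa hU))⟩

end Ultrafilters

theorem statement12_general {Λ : Type u} [Countable Λ] (C : CategoryOfPaths Λ)
    (hfa : FinitelyAligned C) (v : Λ)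
    (x : Set Λ) (hx : x ∈ lamStar C v) :
    (IsUltrafilterIn (tailRing C v) (UC0 C v x) ↔ x ∈ lamStarStar C v) ∧
    IsUltrafilterIn (tailRing C v) (UC C v x) ∧
    ((∃ γ, C.r γ = v ∧ UC C v x = {E | E ∈ tailRing C v ∧ γ ∈ E}) ↔
      ∃ m ∈ x, ∀ γ ∈ x, γ ∈ pTail C m → γ = m) ∧
    (∀ U : Set (Set Λ), IsUltrafilterIn (tailRing C v) U →
      ∃! y : Set Λ, y ∈ lamStar C v ∧ U = UC C v y) :=
  ⟨⟨mem_lamStarStar_of_isUltrafilterIn_UC0 hx, UC0_isUltrafilterIn_of_mem_lamStarStar hfa hx⟩,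
    UC_isUltrafilterIn hx, exists_UC_eq_principal_iff hx, fun _ hU => existsUnique_eq_UC hfa hU⟩

/-- Theorem 6.11. For a countable finitely aligned category
of paths: (a) `𝒰_{C,0}` is an ultrafilter iff `C ∈ vΛ**`; (b) `𝒰_C` is an
ultrafilter, fixed iff `C` has a maximal element; (c) every ultrafilter of
`𝒜_v` is `𝒰_C` for a unique `C ∈ vΛ*`. -/
theorem statement12 {Λ : Type u} [Countable Λ] (C : CategoryOfPaths Λ)
    (hfa : FinitelyAligned C) (v : Λ) (hv : C.r v = v)
    (x : Set Λ) (hx : x ∈ lamStar C v) :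
    (IsUltrafilterIn (tailRing C v) (UC0 C v x) ↔ x ∈ lamStarStar C v) ∧
    IsUltrafilterIn (tailRing C v) (UC C v x) ∧
    ((∃ γ, C.r γ = v ∧ UC C v x = {E | E ∈ tailRing C v ∧ γ ∈ E}) ↔
      ∃ m ∈ x, ∀ γ ∈ x, γ ∈ pTail C m → γ = m) ∧
    (∀ U : Set (Set Λ), IsUltrafilterIn (tailRing C v) U →
      ∃! y : Set Λ, y ∈ lamStar C v ∧ U = UC C v y) :=
  statement12_general C hfa v x hx
end

section
/- Let Λ be a countable finitely aligned category of paths and let x ∈ ∂Λ be aperiodic. Then μx is aperiodic for every μ ∈ Λ r(x) (paths with source r(x)), and σ^ν(x) is aperiodic for every ν ∈ x. -/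
universe u v

variable {Λ : Type u}

lemma self_mem_pTail (C : CategoryOfPaths Λ) (δ : Λ) : δ ∈ pTail C δ :=
  ⟨C.s δ, (C.r_s δ).symm, (C.comp_id δ).symm⟩

lemma pShift_comp' (C : CategoryOfPaths Λ) {a b : Λ} (h : C.s a = C.r b) (y : Set Λ) :
    pShift C (C.comp a b) y = pShift C b (pShift C a y) := by
  ext τ
  simp only [pShift, Set.mem_setOf_eq]
  constructor
  · rintro ⟨h1, h2⟩
    rw [C.s_comp h] at h1
    exact ⟨h1, by rw [h, C.r_comp h1], by rw [← C.comp_assoc h h1]; exact h2⟩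
  · rintro ⟨h1, h2, h3⟩
    exact ⟨by rw [C.s_comp h]; exact h1, by rw [C.comp_assoc h h1]; exact h3⟩

lemma mul_mem_pMulStar (C : CategoryOfPaths Λ) (μ : Λ) {x : Set Λ} {γ : Λ}
    (hγ : γ ∈ x) (hsr : C.s μ = C.r γ) : C.comp μ γ ∈ pMulStar C μ x :=
  ⟨γ, hγ, hsr, self_mem_pTail C _⟩

lemma shift_mul (C : CategoryOfPaths Λ) (μ : Λ) {x : Set Λ} (hher : pHereditary C x)
    {γ : Λ} (hγ : γ ∈ x) (hsr : C.s μ = C.r γ) :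
    pShift C (C.comp μ γ) (pMulStar C μ x) = pShift C γ x := by
  ext τ
  simp only [pShift, Set.mem_setOf_eq, C.s_comp hsr]
  constructor
  · rintro ⟨h1, γ', hγ', hsr', ρ, hρ1, hρ2⟩
    refine ⟨h1, ?_⟩
    have hassoc : C.comp (C.comp μ γ) τ = C.comp μ (C.comp γ τ) :=
      C.comp_assoc hsr h1
    have hsγτ : C.s (C.comp γ τ) = C.r ρ := by
      rw [C.s_comp h1]
      rw [hassoc, C.s_comp (by rw [C.r_comp h1]; exact hsr), C.s_comp h1] at hρ1
      exact hρ1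
    have hρ2' : C.comp μ γ' = C.comp μ (C.comp (C.comp γ τ) ρ) := by
      rw [hρ2, hassoc, C.comp_assoc (by rw [C.r_comp h1]; exact hsr) hsγτ]
    have hγ'eq : γ' = C.comp (C.comp γ τ) ρ :=
      C.left_cancel hsr' (by rw [C.r_comp hsγτ, C.r_comp h1]; exact hsr) hρ2'
    exact hher γ' hγ' (C.comp γ τ) ⟨ρ, hsγτ, hγ'eq⟩
  · rintro ⟨h1, h2⟩
    refine ⟨h1, C.comp γ τ, h2, by rw [C.r_comp h1]; exact hsr, ?_⟩
    rw [← C.comp_assoc hsr h1]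
    exact self_mem_pTail C _

/-- Lemma 8.2. If `x ∈ ∂Λ` is aperiodic, then so are `μx`
for every `μ ∈ Λ r(x)` and `σ^ν(x)` for every `ν ∈ x`. -/
theorem statement15 {Λ : Type u} [Countable Λ] (C : CategoryOfPaths Λ)
    (hfa : FinitelyAligned C) (v : Λ) (hv : C.r v = v)
    (x : Set Λ) (hx : x ∈ lamStar C v)
    (hbd : (Sigma.mk (⟨v, hv⟩ : Vertex C) (⟨x, hx⟩ : Xv C v) : Xtotal C) ∈ boundarySet C)
    (hap : pAperiodic C x) :
    (∀ μ : Λ, C.s μ = v → pAperiodic C (pMulStar C μ x)) ∧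
    (∀ ν ∈ x, pAperiodic C (pShift C ν x)) := by
  obtain ⟨hne, hrng, hdir, hher⟩ := hx
  constructor
  · intro μ hμ α hα β hβ hab heq
    set y := pMulStar C μ x with hy
    obtain ⟨γ₁, hγ₁x, hsr₁, ε, hε1, hε2⟩ := hα
    have hεA : ε ∈ pShift C α y :=
      ⟨hε1, by rw [← hε2]; exact mul_mem_pMulStar C μ hγ₁x hsr₁⟩
    rw [heq] at hεA
    obtain ⟨hβε, hβεy⟩ := hεA
    obtain ⟨γ₂, hγ₂x, hsr₂, ε', hε'1, hε'2⟩ := hβεy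
    -- key : σ^{γ₁} x = σ^{βε} y
    have key : pShift C γ₁ x = pShift C (C.comp β ε) y := by
      rw [← shift_mul C μ hher hγ₁x hsr₁, hε2, pShift_comp' C hε1, heq,
        ← pShift_comp' C hβε]
    have hε'mem : ε' ∈ pShift C γ₁ x := by
      rw [key]
      exact ⟨hε'1, by rw [← hε'2]; exact mul_mem_pMulStar C μ hγ₂x hsr₂⟩
    obtain ⟨hsγ₁, hγ₁ε'x⟩ := hε'mem
    have key2 : pShift C (C.comp γ₁ ε') x = pShift C γ₂ x := by
      rw [pShift_comp' C hsγ₁, key, ← pShift_comp' C hε'1, ← hε'2,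
        shift_mul C μ hher hγ₂x hsr₂]
    have heqγ : C.comp γ₁ ε' = γ₂ := by
      by_contra hne'
      exact hap (C.comp γ₁ ε') hγ₁ε'x γ₂ hγ₂x hne' key2
    have hεε' : C.s ε = C.r ε' := by rw [← C.s_comp hβε]; exact hε'1
    have hfinal : C.comp α (C.comp ε ε') = C.comp β (C.comp ε ε') := by
      rw [← C.comp_assoc hε1 hεε', ← hε2, C.comp_assoc hsr₁ hsγ₁, heqγ, hε'2,
        C.comp_assoc hβε hεε']
    exact hab (C.right_cancel (by rw [C.r_comp hεε']; exact hε1)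
      (by rw [C.r_comp hεε']; exact hβε) hfinal)
  · intro ν hν α hα β hβ hab heq
    obtain ⟨hνα, hναx⟩ := hα
    obtain ⟨hνβ, hνβx⟩ := hβ
    have h1 : pShift C (C.comp ν α) x = pShift C (C.comp ν β) x := by
      rw [pShift_comp' C hνα, pShift_comp' C hνβ, heq]
    exact hap (C.comp ν α) hναx (C.comp ν β) hνβx
      (fun h => hab (C.left_cancel hνα hνβ h)) h1
end
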